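/- arXiv:2208.00157 — 2 statements merged into one kernel-verified Lean document; each statement's English description precedes it below -/
import Mathlib

section
/- Let b ≥ 2 and x ∈ [0,1). Let y = real_b(comp(seq_b(x))) be the real whose base-b expansion is the digit-complement of that of x. Then dim_FS^b(x) = dim_FS^b(y). -/
open Filter Set
open scoped ENNReal

/-- A finite-state transducer over alphabet `A`, with states `Fin n`. -/
structure FST (A : Type) where
  n : ℕ
  tr : Fin n → A → Fin n
  out1 : Fin n → A → List A
  q0 : Fin n

/-- Extension of the transition function to strings. -/
def FST.deltaS {A : Type} (T : FST A) : Fin T.n → List A → Fin T.n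
  | q, [] => q
  | q, a :: w => T.deltaS (T.tr q a) w

/-- Extension of the output function to strings. -/
def FST.nuS {A : Type} (T : FST A) : Fin T.n → List A → List A
  | _, [] => []
  | q, a :: w => T.out1 q a ++ T.nuS (T.tr q a) w

/-- The output of `T` on input `w`. -/
def FST.out {A : Type} (T : FST A) (w : List A) : List A := T.nuS T.q0 w

/-- `T`-information content of a string: shortest input producing it (`⊤` if none). -/
noncomputable def Kfst {A : Type} (T : FST A) (w : List A) : ℕ∞ :=
  sInf {k : ℕ∞ | ∃ π : List A, T.out π = w ∧ (π.length : ℕ∞) = k}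

/-- The real number in `[0,1)` with finite base-`b` expansion `w`. -/
noncomputable def realb (b : ℕ) (w : List (Fin b)) : ℝ :=
  ∑ i : Fin w.length, (w.get i : ℝ) / (b : ℝ) ^ (i.1 + 1)

/-- The real number with base-`b` expansion `S`. -/
noncomputable def realSeq (b : ℕ) (S : ℕ → Fin b) : ℝ :=
  ∑' i : ℕ, (S i : ℝ) / (b : ℝ) ^ (i + 1)

/-- The length-`n` prefix of a sequence, as a string. -/
def pre {A : Type} (S : ℕ → A) (n : ℕ) : List A := List.ofFn (fun i : Fin n => S i.1)

/-- Base-`b` `T`-information content of `x` at precision `δ`. -/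
noncomputable def Kprec (b : ℕ) (T : FST (Fin b)) (δ : ℝ) (x : ℝ) : ℕ∞ :=
  sInf {k : ℕ∞ | ∃ w : List (Fin b), |realb b w - x| < δ ∧ Kfst T w = k}

/-- Base-`b` finite-state dimension of a point of `[0,1)`. -/
noncomputable def dimFSb (b : ℕ) (x : ℝ) : ℝ≥0∞ :=
  ⨅ T : FST (Fin b),
    Filter.liminf (fun δ : ℝ =>
      (Kprec b T δ x : ℝ≥0∞) / ENNReal.ofReal (Real.logb b (1/δ)))
      (nhdsWithin 0 (Set.Ioi 0))

/-- Base-`b` finite-state dimension of a subset of `[0,1)`. -/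
noncomputable def dimFSbSet (b : ℕ) (A : Set ℝ) : ℝ≥0∞ :=
  ⨅ T : FST (Fin b), ⨆ x ∈ A,
    Filter.liminf (fun δ : ℝ =>
      (Kprec b T δ x : ℝ≥0∞) / ENNReal.ofReal (Real.logb b (1/δ)))
      (nhdsWithin 0 (Set.Ioi 0))

/-- Finite-state dimension of a sequence (Doty–Moser characterization). -/
noncomputable def dimFSseq {A : Type} (S : ℕ → A) : ℝ≥0∞ :=
  ⨅ T : FST A,
    Filter.liminf (fun n : ℕ => (Kfst T (pre S n) : ℝ≥0∞) / (n : ℝ≥0∞)) Filter.atTop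

/-- Finite-state dimension of a set of sequences. -/
noncomputable def dimFSseqSet {A : Type} (X : Set (ℕ → A)) : ℝ≥0∞ :=
  ⨅ T : FST A, ⨆ S ∈ X,
    Filter.liminf (fun n : ℕ => (Kfst T (pre S n) : ℝ≥0∞) / (n : ℝ≥0∞)) Filter.atTop

/-- digit complement of a sequence -/
def compSeq (b : ℕ) (S : ℕ → Fin b) : ℕ → Fin b :=
  fun i => ⟨b - 1 - (S i : ℕ), by have := (S i).isLt; omega⟩

/-- `S` ends with infinitely many digits `b-1`. -/
def endsBm1 (b : ℕ) (S : ℕ → Fin b) : Prop := ∃ N, ∀ i ≥ N, (S i : ℕ) = b - 1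

/-- A separator enumerator: a map into `[0,1)` with dense image in `[0,1]`. -/
def isSE {A : Type} (f : List A → ℝ) : Prop :=
  (∀ w, f w ∈ Set.Ico (0:ℝ) 1) ∧ ∀ y ∈ Set.Icc (0:ℝ) 1, y ∈ closure (Set.range f)

/-- `f`-`T`-information content of `x` at precision `δ`. -/
noncomputable def KprecF {A : Type} (T : FST A) (f : List A → ℝ) (δ : ℝ) (x : ℝ) : ℕ∞ :=
  sInf {k : ℕ∞ | ∃ w : List A, |f w - x| < δ ∧ Kfst T w = k}

/-- `f`-enumerator finite-state dimension of a point. -/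
noncomputable def dimFSf {A : Type} [Fintype A] (f : List A → ℝ) (x : ℝ) : ℝ≥0∞ :=
  ⨅ T : FST A,
    Filter.liminf (fun δ : ℝ =>
      (KprecF T f δ x : ℝ≥0∞) / ENNReal.ofReal (Real.logb (Fintype.card A) (1/δ)))
      (nhdsWithin 0 (Set.Ioi 0))

/-- `f`-enumerator finite-state dimension of a set. -/
noncomputable def dimFSfSet {A : Type} [Fintype A] (f : List A → ℝ) (E : Set ℝ) : ℝ≥0∞ :=
  ⨅ T : FST A, ⨆ x ∈ E,
    Filter.liminf (fun δ : ℝ =>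
      (KprecF T f δ x : ℝ≥0∞) / ENNReal.ofReal (Real.logb (Fintype.card A) (1/δ)))
      (nhdsWithin 0 (Set.Ioi 0))

open scoped Classical in
/-- Number of occurrences of `w` among the first `N` positions of `S`. -/
noncomputable def occCount {b : ℕ} (S : ℕ → Fin b) (w : List (Fin b)) (N : ℕ) : ℕ :=
  (Finset.range N).filter (fun i => ∀ j : Fin w.length, S (i + j.1) = w.get j) |>.card

/-!
Digit complementation sends `x = realSeq b S` to `1 - x`, so it suffices to show
`dimFSb b (1 - x) ≤ dimFSb b x` for every real `x`. If a transducer `T` outputs `w` with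
`|realb b w - x| < δ` on an input `π`, a transducer built from `T` outputs the complement of `w`
followed by about `log_b (1/δ)` digits `b - 1`, a word within `2δ` of `1 - x`. So that this
transducer knows where `π` ends, its input is `π` cut into blocks of length `r + 1`, each
preceded by a flag digit; this costs a factor `1 + 1/(r+1)` on `|π|`, and the padding is
produced at a rate of `r + 1` output digits per input digit. Since
`log_b (1/(2δ)) / log_b (1/δ) → 1`, this gives
`dimFSb b (1 - x) ≤ (1 + 1/(r+1)) * dimFSb b x + 1/(r+1)` for every `r`.
-/

open Topology

namespace FST

variable {A : Type}

lemma nuS_append (T : FST A) (u v : List A) (q : Fin T.n) :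
    T.nuS q (u ++ v) = T.nuS q u ++ T.nuS (T.deltaS q u) v := by
  induction u generalizing q with
  | nil => simp [nuS, deltaS]
  | cons a u ih => simp [nuS, deltaS, ih]

def runOutput {Q : Type} (step : Q → A → Q) (out : Q → A → List A) : Q → List A → List A
  | _, [] => []
  | q, a :: w => out q a ++ runOutput step out (step q a) w

noncomputable def ofStep (Q : Type) [Fintype Q] (step : Q → A → Q) (out : Q → A → List A)
    (q₀ : Q) : FST A where
  n := Fintype.card Q
  tr q a := Fintype.equivFin Q (step ((Fintype.equivFin Q).symm q) a)
  out1 q a := out ((Fintype.equivFin Q).symm q) a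
  q0 := Fintype.equivFin Q q₀

lemma ofStep_out {Q : Type} [Fintype Q] (step : Q → A → Q) (out : Q → A → List A) (q₀ : Q)
    (w : List A) : (ofStep Q step out q₀).out w = runOutput step out q₀ w := by
  suffices ∀ q, (ofStep Q step out q₀).nuS (Fintype.equivFin Q q) w = runOutput step out q w from
    this q₀
  induction w with
  | nil => simp [nuS, runOutput]
  | cons a w ih => simp [nuS, runOutput, ofStep, ← ih]

end FST

inductive BlockState (n r : ℕ) : Type
  | flag : Fin n → BlockState n r
  | block : Fin n → Fin (r + 1) → BlockState n r
  | select : Fin n → BlockState n r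
  | pad : BlockState n r
  deriving Fintype

namespace BlockState

variable {A : Type} [DecidableEq A] (T : FST A) (g : A → A) (p : List A) (f₀ : A) (r : ℕ)

/-- Input format: the flag `f₀` announces a block of `r + 1` letters for `T`; any other flag is
followed either by `f₀`, which starts the padding, or by another non-`f₀` letter and then a
single letter for `T`. In state `block q i`, `i + 1` letters of the current block remain. -/
def step : BlockState T.n r → A → BlockState T.n r
  | flag q, a => if a = f₀ then block q (Fin.last r) else select q
  | block q i, a =>
    if i.val = 0 then flag (T.tr q a) else block (T.tr q a) ⟨i.val - 1, by omega⟩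
  | select q, a => if a = f₀ then pad else block q 0
  | pad, _ => pad

def output : BlockState T.n r → A → List A
  | block q _, a => (T.out1 q a).map g
  | pad, _ => p
  | _, _ => []

end BlockState

open BlockState in
noncomputable def FST.blockMachine {A : Type} [DecidableEq A] (T : FST A) (g : A → A)
    (p : List A) (f₀ : A) (r : ℕ) : FST A :=
  FST.ofStep (BlockState T.n r) (step T f₀ r) (output T g p r) (flag T.q0)

def encodeBlocks {A : Type} (f₀ f₁ : A) (r : ℕ) : ℕ → List A → List A
  | 0, π => π.flatMap (fun a => [f₁, f₁, a]) ++ [f₁, f₀]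
  | t + 1, π => f₀ :: (π.take (r + 1) ++ encodeBlocks f₀ f₁ r t (π.drop (r + 1)))

def blockEncode {A : Type} (f₀ f₁ : A) (r : ℕ) (π : List A) (m : ℕ) : List A :=
  encodeBlocks f₀ f₁ r (π.length / (r + 1)) π ++ List.replicate m f₀

namespace BlockState

variable {A : Type} [DecidableEq A] (T : FST A) (g : A → A) (p : List A) (f₀ : A) (r : ℕ)

local notation "run" => FST.runOutput (step T f₀ r) (output T g p r)

lemma run_pad (a : A) (m : ℕ) :
    run pad (List.replicate m a) = (List.replicate m p).flatten := by
  induction m with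
  | zero => rfl
  | succ m ih => simp [List.replicate_succ, FST.runOutput, step, output, ih]

lemma run_block (q : Fin T.n) (i : Fin (r + 1)) (τ σ : List A) (hτ : τ.length = i.val + 1) :
    run (block q i) (τ ++ σ) = (T.nuS q τ).map g ++ run (flag (T.deltaS q τ)) σ := by
  induction τ generalizing q i with
  | nil => simp at hτ
  | cons a τ ih =>
    by_cases hi : i.val = 0
    · obtain rfl : τ = [] := List.eq_nil_of_length_eq_zero (by simp at hτ; omega)
      simp [FST.runOutput, step, output, hi, FST.nuS, FST.deltaS]
    · simp only [List.length_cons] at hτ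
      simp [FST.runOutput, step, output, hi, FST.nuS, FST.deltaS,
        ih (T.tr q a) ⟨i.val - 1, by omega⟩ (by simp; omega)]

lemma run_singles {f₁ : A} (hf : f₁ ≠ f₀) (q : Fin T.n) (π σ : List A) :
    run (flag q) (π.flatMap (fun a => [f₁, f₁, a]) ++ f₁ :: f₀ :: σ)
      = (T.nuS q π).map g ++ run pad σ := by
  induction π generalizing q with
  | nil => simp [FST.runOutput, step, output, hf, FST.nuS]
  | cons a π ih => simp [FST.runOutput, step, output, hf, FST.nuS, ih]

lemma run_encodeBlocks {f₁ : A} (hf : f₁ ≠ f₀) (t : ℕ) (q : Fin T.n) (π σ : List A)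
    (hπ : t * (r + 1) ≤ π.length) :
    run (flag q) (encodeBlocks f₀ f₁ r t π ++ σ) = (T.nuS q π).map g ++ run pad σ := by
  induction t generalizing q π with
  | zero => simpa [encodeBlocks] using run_singles T g p f₀ r hf q π σ
  | succ t ih =>
    rw [Nat.succ_mul] at hπ
    have hlen : (π.take (r + 1)).length = (Fin.last r).val + 1 := by simp; omega
    rw [encodeBlocks, List.cons_append, List.append_assoc]
    simp only [FST.runOutput, step, if_pos, output, List.nil_append]
    rw [run_block T g p f₀ r q _ _ _ hlen, ih _ _ (by simp; omega), ← List.append_assoc,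
      ← List.map_append, ← FST.nuS_append, List.take_append_drop]

end BlockState

section BlockEncoding

variable {A : Type} (f₀ f₁ : A) (r : ℕ)

lemma length_encodeBlocks (t : ℕ) (π : List A) (hπ : t * (r + 1) ≤ π.length) :
    (encodeBlocks f₀ f₁ r t π).length = π.length + t + 2 * (π.length - t * (r + 1)) + 2 := by
  induction t generalizing π with
  | zero => simp [encodeBlocks]; omega
  | succ t ih =>
    rw [Nat.succ_mul] at hπ
    rw [encodeBlocks, List.length_cons, List.length_append, ih _ (by simp; omega)]
    simp only [List.length_take, List.length_drop, Nat.succ_mul]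
    omega

lemma length_blockEncode_le (π : List A) (m : ℕ) :
    (blockEncode f₀ f₁ r π m).length ≤ π.length + π.length / (r + 1) + 2 * r + 2 + m := by
  rw [blockEncode, List.length_append, length_encodeBlocks _ _ _ _ _ (Nat.div_mul_le_self _ _),
    List.length_replicate, ← Nat.mod_eq_sub_div_mul]
  have := Nat.mod_lt π.length (show 0 < r + 1 by omega)
  omega

theorem FST.blockMachine_out [DecidableEq A] (T : FST A) (g : A → A) (p : List A)
    (hf : f₁ ≠ f₀) (π : List A) (m : ℕ) :
    (T.blockMachine g p f₀ r).out (blockEncode f₀ f₁ r π m)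
      = (T.out π).map g ++ (List.replicate m p).flatten := by
  rw [blockMachine, FST.ofStep_out, blockEncode,
    BlockState.run_encodeBlocks T g p f₀ r hf _ _ _ _ (Nat.div_mul_le_self _ _),
    BlockState.run_pad]
  rfl

end BlockEncoding

section Digits

variable {b : ℕ}

@[simp]
lemma realb_nil : realb b [] = 0 := Fin.sum_univ_zero _

lemma realb_cons (a : Fin b) (w : List (Fin b)) :
    realb b (a :: w) = ((a : ℝ) + realb b w) / b := by
  simp only [realb, List.length_cons, Fin.sum_univ_succ, add_div, Finset.sum_div]
  congr 1
  · simp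
  · refine Finset.sum_congr rfl fun i _ => ?_
    simp [pow_succ', div_div, mul_comm]

lemma realb_append (u v : List (Fin b)) :
    realb b (u ++ v) = realb b u + realb b v / (b : ℝ) ^ u.length := by
  induction u with
  | nil => simp
  | cons a u ih =>
    simp only [List.cons_append, realb_cons, ih, List.length_cons, pow_succ']
    rw [add_div, add_div, add_div, div_div, add_assoc, mul_comm]

lemma realb_append_replicate_zero (hb : 0 < b) (w : List (Fin b)) (m : ℕ) :
    realb b (w ++ List.replicate m ⟨0, hb⟩) = realb b w := by
  suffices realb b (List.replicate m ⟨0, hb⟩) = 0 by simp [realb_append, this]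
  induction m with
  | zero => simp
  | succ m ih => simp [List.replicate_succ, realb_cons, ih]

lemma realb_map_rev (w : List (Fin b)) :
    realb b (w.map Fin.rev) = 1 - ((b : ℝ) ^ w.length)⁻¹ - realb b w := by
  induction w with
  | nil => simp
  | cons a w ih =>
    have hb : (b : ℝ) ≠ 0 := Nat.cast_ne_zero.mpr a.pos.ne'
    have ha : ((a.rev : ℕ) : ℝ) = b - 1 - a := by
      rw [Fin.val_rev, Nat.cast_sub (by omega)]
      push_cast
      ring
    simp only [List.map_cons, realb_cons, ih, ha, List.length_cons, pow_succ]
    field_simp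
    ring

lemma realSeq_eq_ofDigits (S : ℕ → Fin b) : realSeq b S = Real.ofDigits S := by
  simp [realSeq, Real.ofDigits, Real.ofDigitsTerm, div_eq_mul_inv]

lemma realSeq_compSeq (hb : 2 ≤ b) (S : ℕ → Fin b) :
    realSeq b (compSeq b S) = 1 - realSeq b S := by
  have hterm : ∀ i, Real.ofDigitsTerm (compSeq b S) i + Real.ofDigitsTerm S i
      = Real.ofDigitsTerm (fun _ => (⟨b - 1, by omega⟩ : Fin b)) i := by
    intro i
    have := (S i).isLt
    simp only [Real.ofDigitsTerm, compSeq, ← add_mul]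
    congr 1
    push_cast [Nat.cast_sub (show (S i : ℕ) ≤ b - 1 by omega), Nat.cast_sub (show 1 ≤ b by omega)]
    ring
  have hsum : Real.ofDigits (compSeq b S) + Real.ofDigits S = 1 := by
    rw [Real.ofDigits, Real.ofDigits, ← Summable.tsum_add Real.summable_ofDigitsTerm
      Real.summable_ofDigitsTerm, tsum_congr hterm, ← Real.ofDigits,
      Real.ofDigits_const_last_eq_one' hb]
  rw [realSeq_eq_ofDigits, realSeq_eq_ofDigits]
  linarith

end Digits

lemma inv_pow_le_of_logb_le {b : ℝ} (hb : 1 < b) {δ : ℝ} (hδ : 0 < δ) {M : ℕ}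
    (hM : Real.logb b (1 / δ) ≤ M) : (b ^ M)⁻¹ ≤ δ := by
  rw [Real.logb_le_iff_le_rpow hb (by positivity), Real.rpow_natCast] at hM
  rwa [inv_le_comm₀ (by positivity) hδ, ← one_div]

lemma natCeil_le_ofReal_add_one (z : ℝ) : (⌈z⌉₊ : ℝ≥0∞) ≤ ENNReal.ofReal z + 1 := by
  rcases le_or_gt z 0 with hz | hz
  · simp [Nat.ceil_eq_zero.mpr hz]
  · rw [← ENNReal.ofReal_natCast, ← ENNReal.ofReal_one, ← ENNReal.ofReal_add hz.le zero_le_one]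
    exact ENNReal.ofReal_le_ofReal (Nat.ceil_lt_add_one hz.le).le

section Complexity

variable {b : ℕ}

lemma Kprec_le_length (T : FST (Fin b)) {δ y : ℝ} (π : List (Fin b))
    (h : |realb b (T.out π) - y| < δ) : Kprec b T δ y ≤ π.length :=
  sInf_le_of_le ⟨_, h, rfl⟩ (sInf_le ⟨π, rfl, rfl⟩)

lemma exists_length_eq_Kprec (T : FST (Fin b)) {δ x : ℝ} (h : Kprec b T δ x ≠ ⊤) :
    ∃ π : List (Fin b), |realb b (T.out π) - x| < δ ∧ (π.length : ℕ∞) = Kprec b T δ x := by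
  have hne : {k : ℕ∞ | ∃ w : List (Fin b), |realb b w - x| < δ ∧ Kfst T w = k}.Nonempty :=
    Set.nonempty_iff_ne_empty.mpr fun he => h (by rw [Kprec, he, sInf_empty])
  obtain ⟨w, hw, hK⟩ := csInf_mem hne
  have hne' : {k : ℕ∞ | ∃ π : List (Fin b), T.out π = w ∧ (π.length : ℕ∞) = k}.Nonempty :=
    Set.nonempty_iff_ne_empty.mpr fun he => h (by rw [Kprec, ← hK, Kfst, he, sInf_empty])
  obtain ⟨π, rfl, hπ⟩ := csInf_mem hne'
  exact ⟨π, hw, hπ.trans hK⟩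

end Complexity

section Comparison

variable {b : ℕ}

lemma abs_realb_map_rev_sub_lt (hb : 1 < b) {w : List (Fin b)} {x δ : ℝ}
    (hw : |realb b w - x| < δ) {M : ℕ} (hM : Real.logb b (1 / δ) ≤ M) :
    |realb b ((w ++ List.replicate M (⟨0, by omega⟩ : Fin b)).map Fin.rev) - (1 - x)| < 2 * δ := by
  have hb' : 1 < (b : ℝ) := by exact_mod_cast hb
  have hδ : 0 < δ := (abs_nonneg _).trans_lt hw
  have hpow : ((b : ℝ) ^ (w.length + M))⁻¹ ≤ δ :=
    inv_pow_le_of_logb_le hb' hδ (hM.trans (by push_cast; linarith))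
  have hpos : 0 < ((b : ℝ) ^ (w.length + M))⁻¹ := by positivity
  rw [realb_map_rev, realb_append_replicate_zero, List.length_append, List.length_replicate]
  rw [abs_lt] at hw ⊢
  constructor <;> linarith

theorem exists_Kprec_one_sub_le (hb : 2 ≤ b) (T : FST (Fin b)) (r : ℕ) :
    ∃ T' : FST (Fin b), ∀ x δ : ℝ, 0 < δ →
      (Kprec b T' (2 * δ) (1 - x) : ℝ≥0∞) ≤ (1 + ((r : ℝ≥0∞) + 1)⁻¹) * Kprec b T δ x
        + ((r : ℝ≥0∞) + 1)⁻¹ * ENNReal.ofReal (Real.logb b (1 / δ)) + (2 * r + 3) := by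
  let z : Fin b := ⟨0, by omega⟩
  let o : Fin b := ⟨1, by omega⟩
  refine ⟨T.blockMachine Fin.rev (List.replicate (r + 1) z.rev) z r, fun x δ hδ => ?_⟩
  rcases eq_or_ne (Kprec b T δ x) ⊤ with hK | hK
  · simp [hK]
  obtain ⟨π, hπ, hlen⟩ := exists_length_eq_Kprec T hK
  rw [← hlen]
  set m := ⌈Real.logb b (1 / δ) / (r + 1)⌉₊
  have hout : (T.blockMachine Fin.rev (List.replicate (r + 1) z.rev) z r).out
      (blockEncode z o r π m) = (T.out π ++ List.replicate (m * (r + 1)) z).map Fin.rev := by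
    rw [FST.blockMachine_out (hf := by simp [z, o]), List.flatten_replicate_replicate]
    simp
  have hM : Real.logb b (1 / δ) ≤ (m * (r + 1) : ℕ) := by
    have h := Nat.le_ceil (Real.logb b (1 / δ) / (r + 1))
    rw [div_le_iff₀ (by positivity)] at h
    push_cast
    exact h
  have hKlen := Kprec_le_length _ _ (hout ▸ abs_realb_map_rev_sub_lt (by omega) hπ hM)
  have hdiv : ((π.length / (r + 1) : ℕ) : ℝ≥0∞) ≤ ((r : ℝ≥0∞) + 1)⁻¹ * π.length := by
    rw [mul_comm, ← div_eq_mul_inv, ENNReal.le_div_iff_mul_le (by simp) (by simp)]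
    exact_mod_cast Nat.div_mul_le_self π.length (r + 1)
  have hm : (m : ℝ≥0∞) ≤ ((r : ℝ≥0∞) + 1)⁻¹ * ENNReal.ofReal (Real.logb b (1 / δ)) + 1 := by
    refine (natCeil_le_ofReal_add_one _).trans_eq ?_
    rw [ENNReal.ofReal_div_of_pos (by positivity), div_eq_mul_inv, mul_comm]
    congr
    exact_mod_cast ENNReal.ofReal_natCast (r + 1)
  calc (Kprec b _ (2 * δ) (1 - x) : ℝ≥0∞)
      ≤ ((π.length + π.length / (r + 1) + 2 * r + 2 + m : ℕ) : ℕ∞) :=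
        ENat.toENNReal_le.mpr (hKlen.trans (Nat.cast_le.mpr (length_blockEncode_le _ _ _ _ _)))
    _ ≤ π.length + ((r : ℝ≥0∞) + 1)⁻¹ * π.length + 2 * r + 2
          + (((r : ℝ≥0∞) + 1)⁻¹ * ENNReal.ofReal (Real.logb b (1 / δ)) + 1) := by
        push_cast
        gcongr
    _ = _ := by push_cast; ring

end Comparison

noncomputable def lowerLogRate (b : ℝ) (G : ℝ → ℝ≥0∞) : ℝ≥0∞ :=
  liminf (fun δ => G δ / ENNReal.ofReal (Real.logb b (1 / δ))) (𝓝[>] 0)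

lemma dimFSb_eq_iInf_lowerLogRate (b : ℕ) (x : ℝ) :
    dimFSb b x = ⨅ T : FST (Fin b), lowerLogRate b (fun δ => Kprec b T δ x) := rfl

lemma tendsto_logb_one_div {b : ℝ} (hb : 1 < b) :
    Tendsto (fun δ => Real.logb b (1 / δ)) (𝓝[>] 0) atTop :=
  (Real.tendsto_logb_atTop hb).comp (tendsto_inv_nhdsGT_zero.congr fun δ => (one_div δ).symm)

lemma tendsto_two_mul_nhdsGT_zero : Tendsto (fun δ : ℝ => 2 * δ) (𝓝[>] 0) (𝓝[>] 0) :=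
  tendsto_nhdsWithin_iff.mpr
    ⟨by simpa using ((continuous_const_mul (2 : ℝ)).tendsto 0).mono_left nhdsWithin_le_nhds,
      eventually_nhdsWithin_of_forall fun _ hδ => Set.mem_Ioi.mpr (mul_pos two_pos hδ)⟩

lemma tendsto_ofReal_logb_div_logb_two_mul {b : ℝ} (hb : 1 < b) :
    Tendsto (fun δ => ENNReal.ofReal (Real.logb b (1 / δ)) /
      ENNReal.ofReal (Real.logb b (1 / (2 * δ)))) (𝓝[>] 0) (𝓝 1) := by
  have hs : Tendsto (fun δ => Real.logb b (1 / (2 * δ))) (𝓝[>] 0) atTop :=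
    (tendsto_logb_one_div hb).comp tendsto_two_mul_nhdsGT_zero
  have hlim := ENNReal.tendsto_ofReal
    ((tendsto_const_nhds (x := Real.logb b 2)).div_atTop hs |>.const_add 1)
  rw [add_zero, ENNReal.ofReal_one] at hlim
  refine hlim.congr' ?_
  filter_upwards [hs.eventually_gt_atTop 0, self_mem_nhdsWithin] with δ hpos (hδ : 0 < δ)
  have hsplit : Real.logb b (1 / δ) = Real.logb b (1 / (2 * δ)) + Real.logb b 2 := by
    rw [← Real.logb_mul (by positivity) two_ne_zero]
    field_simp
  rw [← ENNReal.ofReal_div_of_pos hpos, hsplit, add_div, div_self hpos.ne']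

lemma ENNReal.liminf_mul_le_of_tendsto_one {α : Type*} {F : Filter α} [F.NeBot]
    {u v : α → ℝ≥0∞} (hu : Tendsto u F (𝓝 1)) :
    liminf (fun t => u t * v t) F ≤ liminf v F := by
  have h := ENNReal.liminf_mul_le (f := F) (u := u) (v := v) (by simp [hu.limsup_eq])
    (by simp [hu.limsup_eq])
  rwa [hu.limsup_eq, one_mul] at h

lemma lowerLogRate_le_liminf_two_mul {b : ℝ} (hb : 1 < b) (G : ℝ → ℝ≥0∞) :
    lowerLogRate b G
      ≤ liminf (fun δ => G (2 * δ) / ENNReal.ofReal (Real.logb b (1 / δ))) (𝓝[>] 0) := by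
  refine (tendsto_two_mul_nhdsGT_zero.liminf_le_liminf_comp).trans (le_of_eq ?_) |>.trans
    (ENNReal.liminf_mul_le_of_tendsto_one (tendsto_ofReal_logb_div_logb_two_mul hb))
  refine liminf_congr ?_
  filter_upwards [(tendsto_logb_one_div hb).eventually_gt_atTop 0] with δ hpos
  set ℓ := ENNReal.ofReal (Real.logb b (1 / δ))
  set ℓ₂ := ENNReal.ofReal (Real.logb b (1 / (2 * δ)))
  have hℓ : ℓ * ℓ⁻¹ = 1 := ENNReal.mul_inv_cancel (by simpa [ℓ] using hpos) ENNReal.ofReal_ne_top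
  calc G (2 * δ) / ℓ₂ = G (2 * δ) * ℓ₂⁻¹ * (ℓ * ℓ⁻¹) := by rw [hℓ, mul_one, div_eq_mul_inv]
    _ = ℓ / ℓ₂ * (G (2 * δ) / ℓ) := by simp only [div_eq_mul_inv]; ring

lemma liminf_div_ofReal_le_of_le {α : Type*} {F : Filter α} [F.NeBot] {ℓ : α → ℝ}
    (hℓ : Tendsto ℓ F atTop) {f g : α → ℝ≥0∞} {a c C : ℝ≥0∞} (ha : a ≠ ⊤) (hC : C ≠ ⊤)
    (h : ∀ᶠ t in F, g t ≤ a * f t + c * ENNReal.ofReal (ℓ t) + C) :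
    liminf (fun t => g t / ENNReal.ofReal (ℓ t)) F
      ≤ a * liminf (fun t => f t / ENNReal.ofReal (ℓ t)) F + c := by
  have hCℓ : Tendsto (fun t => C / ENNReal.ofReal (ℓ t)) F (𝓝 0) := by
    simpa using ENNReal.Tendsto.const_div (ENNReal.tendsto_ofReal_atTop.comp hℓ) (Or.inr hC)
  calc liminf (fun t => g t / ENNReal.ofReal (ℓ t)) F
      ≤ liminf ((fun t => a * (f t / ENNReal.ofReal (ℓ t)) + c)
          + fun t => C / ENNReal.ofReal (ℓ t)) F := by
        refine liminf_le_liminf ?_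
        filter_upwards [h, hℓ.eventually_gt_atTop 0] with t ht hpos
        have h0 : ENNReal.ofReal (ℓ t) ≠ 0 := by simpa using hpos
        refine (ENNReal.div_le_div_right ht _).trans_eq ?_
        rw [ENNReal.add_div, ENNReal.add_div, ENNReal.mul_div_cancel_right h0 ENNReal.ofReal_ne_top,
          mul_div_assoc]
        rfl
    _ = a * liminf (fun t => f t / ENNReal.ofReal (ℓ t)) F + c := by
        rw [ENNReal.liminf_add_of_right_tendsto_zero hCℓ,
          liminf_add_const _ _ _ (by isBoundedDefault) (by isBoundedDefault),
          ENNReal.liminf_const_mul_of_ne_top ha]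

lemma dimFSb_one_sub_le_mul_add {b : ℕ} (hb : 2 ≤ b) (x : ℝ) (r : ℕ) :
    dimFSb b (1 - x) ≤ (1 + ((r : ℝ≥0∞) + 1)⁻¹) * dimFSb b x + ((r : ℝ≥0∞) + 1)⁻¹ := by
  have hb' : 1 < (b : ℝ) := by exact_mod_cast hb
  rw [dimFSb_eq_iInf_lowerLogRate b x, ENNReal.mul_iInf_of_ne (by simp) (by simp),
    ENNReal.iInf_add]
  refine le_iInf fun T => ?_
  obtain ⟨T', hT'⟩ := exists_Kprec_one_sub_le hb T r
  calc dimFSb b (1 - x) ≤ lowerLogRate b (fun δ => Kprec b T' δ (1 - x)) := iInf_le _ T'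
    _ ≤ _ := lowerLogRate_le_liminf_two_mul hb' _
    _ ≤ _ := liminf_div_ofReal_le_of_le (tendsto_logb_one_div hb') (by simp)
        (by simp [ENNReal.mul_eq_top])
        (eventually_nhdsWithin_of_forall fun δ hδ => hT' x δ hδ)

lemma dimFSb_one_sub_le {b : ℕ} (hb : 2 ≤ b) (x : ℝ) : dimFSb b (1 - x) ≤ dimFSb b x := by
  have hε : Tendsto (fun r : ℕ => ((r : ℝ≥0∞) + 1)⁻¹) atTop (𝓝 0) := by
    have := ENNReal.tendsto_inv_nat_nhds_zero.comp (tendsto_add_atTop_nat 1)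
    simpa [Function.comp_def] using this
  have hlim : Tendsto (fun r : ℕ => (1 + ((r : ℝ≥0∞) + 1)⁻¹) * dimFSb b x + ((r : ℝ≥0∞) + 1)⁻¹)
      atTop (𝓝 (dimFSb b x)) := by
    have h1 : Tendsto (fun r : ℕ => 1 + ((r : ℝ≥0∞) + 1)⁻¹) atTop (𝓝 1) := by
      simpa using tendsto_const_nhds.add hε
    simpa using (ENNReal.Tendsto.mul_const h1 (Or.inl one_ne_zero)).add hε
  exact ge_of_tendsto hlim (Eventually.of_forall (dimFSb_one_sub_le_mul_add hb x))

theorem dimFSb_comp_general (b : ℕ) (hb : 2 ≤ b) (x : ℝ)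
    (S : ℕ → Fin b) (hS : realSeq b S = x) :
    dimFSb b x = dimFSb b (realSeq b (compSeq b S)) := by
  rw [realSeq_compSeq hb, hS]
  refine le_antisymm ?_ (dimFSb_one_sub_le hb x)
  simpa using dimFSb_one_sub_le hb (1 - x)

/-- dim_FS^b(x) = dim_FS^b(real_b(comp(seq_b(x)))). -/
theorem dimFSb_comp (b : ℕ) (hb : 2 ≤ b) (x : ℝ) (hx : x ∈ Set.Ico (0:ℝ) 1)
    (S : ℕ → Fin b) (hS : realSeq b S = x) (hS' : ¬ endsBm1 b S) :
    dimFSb b x = dimFSb b (realSeq b (compSeq b S)) :=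
  dimFSb_comp_general b hb x S hS
end

section
/- For every separator enumerator f and every A ⊆ [0,1), dim_H(A) ≤ dim_FS^f(A), i.e., the Hausdorff dimension of A is a lower bound for its f-enumerator finite-state dimension for every choice of enumerator f. -/
open Filter Set
open scoped ENNReal

/-!
Fix a transducer `T` and reals `t' < t` above the dimension bound of every `x ∈ A`, and let
`c = |Σ|`. Each `x ∈ A` lies, for infinitely many `n`, within `c ^ (-n / t')` of `f (T π)` for
some input `π` of length at most `n`. There are fewer than `c ^ (n + 1)` such inputs, so these
balls satisfy `∑ₙ c ^ (n + 1) (c ^ (-n / t')) ^ t < ∞`, and a Hausdorff–Cantelli argument gives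
`μH[t] A = 0`, hence `dimH A ≤ t`. For `c ≤ 1` the logarithm vanishes and `A` is at most a point.
-/

open scoped NNReal Topology
open Metric MeasureTheory

theorem hausdorffMeasure_eq_zero_of_frequently_mem_eball {X β : Type*} [EMetricSpace X]
    [MeasurableSpace X] [BorelSpace X] (y : β → X) (S : ℕ → Finset β) {r : ℕ → ℝ≥0∞}
    (hr : Antitone r) (hr0 : Tendsto r atTop (𝓝 0)) {d : ℝ} (hd : 0 ≤ d)
    (hsum : ∑' n, (S n).card * r n ^ d ≠ ∞) {A : Set X}
    (hA : ∀ x ∈ A, ∃ᶠ n in atTop, ∃ b ∈ S n, x ∈ eball (y b) (r n)) :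
    μH[d] A = 0 := by
  set U : ∀ N, (Σ k : ℕ, S (k + N)) → Set X := fun N i => eball (y i.2) (r (i.1 + N))
  have hdiam : ∀ N i, ediam (U N i) ≤ 2 * r N := fun N i =>
    ediam_eball_le.trans (mul_le_mul_right (hr (Nat.le_add_left N i.1)) 2)
  have hcover : ∀ N, A ⊆ ⋃ i, U N i := by
    intro N x hx
    obtain ⟨n, hNn, b, hb, hxb⟩ := frequently_atTop.1 (hA x hx) N
    refine mem_iUnion.2 ⟨⟨n - N, b, by rwa [Nat.sub_add_cancel hNn]⟩, ?_⟩
    simpa only [U, Nat.sub_add_cancel hNn] using hxb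
  have hsum_le : ∀ N, ∑' i, ediam (U N i) ^ d ≤
      2 ^ d * ∑' k, (S (k + N)).card * r (k + N) ^ d := by
    intro N
    rw [ENNReal.tsum_sigma', ← ENNReal.tsum_mul_left]
    refine ENNReal.tsum_le_tsum fun k => ?_
    rw [Finset.tsum_subtype (S (k + N)) fun b => ediam (eball (y b) (r (k + N))) ^ d]
    calc ∑ b ∈ S (k + N), ediam (eball (y b) (r (k + N))) ^ d
        ≤ ∑ _b ∈ S (k + N), (2 * r (k + N)) ^ d :=
          Finset.sum_le_sum fun b _ => ENNReal.rpow_le_rpow ediam_eball_le hd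
      _ = 2 ^ d * ((S (k + N)).card * r (k + N) ^ d) := by
          rw [Finset.sum_const, nsmul_eq_mul, ENNReal.mul_rpow_of_nonneg _ _ hd]; ring
  have htail : Tendsto (fun N => 2 ^ d * ∑' k, (S (k + N)).card * r (k + N) ^ d) atTop (𝓝 0) := by
    simpa using ENNReal.Tendsto.const_mul (ENNReal.tendsto_sum_nat_add _ hsum)
      (Or.inr (ENNReal.rpow_ne_top_of_nonneg hd ENNReal.ofNat_ne_top))
  refine le_antisymm ?_ bot_le
  calc μH[d] A
      ≤ liminf (fun N => ∑' i, ediam (U N i) ^ d) atTop :=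
        Measure.hausdorffMeasure_le_liminf_tsum d A (fun N => 2 * r N)
          (by simpa using ENNReal.Tendsto.const_mul hr0 (Or.inr ENNReal.ofNat_ne_top)) U
          (Eventually.of_forall hdiam) (Eventually.of_forall hcover)
    _ ≤ liminf (fun N => 2 ^ d * ∑' k, (S (k + N)).card * r (k + N) ^ d) atTop :=
        liminf_le_liminf (Eventually.of_forall hsum_le)
    _ = 0 := htail.liminf_eq

theorem ENat.sInf_mem_of_ne_top {s : Set ℕ∞} (h : sInf s ≠ ⊤) : sInf s ∈ s :=
  csInf_mem (Set.nonempty_iff_ne_empty.2 fun hs => h (hs ▸ sInf_empty))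

theorem Real.le_rpow_neg_inv_pow_of_le_mul_logb {b t δ : ℝ} (hb : 1 < b) (ht : 0 < t)
    (hδ : 0 < δ) {n : ℕ} (hn : (n : ℝ) ≤ t * Real.logb b (1 / δ)) :
    δ ≤ (b ^ (-t⁻¹)) ^ n := by
  rw [one_div, Real.logb_inv] at hn
  rw [← Real.rpow_natCast, ← Real.rpow_mul (by positivity)]
  calc δ = b ^ Real.logb b δ := (Real.rpow_logb (by positivity) hb.ne' hδ).symm
    _ ≤ b ^ (-t⁻¹ * n) := by
      refine Real.rpow_le_rpow_of_exponent_le hb.le ?_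
      rw [neg_mul, le_neg, ← div_eq_inv_mul, div_le_iff₀ ht]
      linarith

def inputsUpTo (σ : Type) [Fintype σ] [DecidableEq σ] (n : ℕ) : Finset (List σ) :=
  (Finset.range (n + 1)).biUnion fun k => Finset.univ.image (List.ofFn (n := k))

section inputsUpTo

variable {σ : Type} [Fintype σ] [DecidableEq σ]

theorem mem_inputsUpTo {n : ℕ} {π : List σ} : π ∈ inputsUpTo σ n ↔ π.length ≤ n := by
  simp only [inputsUpTo, Finset.mem_biUnion, Finset.mem_range, Finset.mem_image,
    Finset.mem_univ, true_and]
  constructor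
  · rintro ⟨k, hk, g, rfl⟩
    simpa using Nat.lt_succ_iff.1 hk
  · exact fun h => ⟨π.length, Nat.lt_succ_of_le h, π.get, List.ofFn_get π⟩

theorem card_inputsUpTo_lt (hσ : 1 < Fintype.card σ) (n : ℕ) :
    (inputsUpTo σ n).card < Fintype.card σ ^ (n + 1) :=
  calc (inputsUpTo σ n).card
      ≤ ∑ k ∈ Finset.range (n + 1), (Finset.univ.image (List.ofFn (α := σ) (n := k))).card :=
        Finset.card_biUnion_le
    _ ≤ ∑ k ∈ Finset.range (n + 1), Fintype.card σ ^ k :=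
        Finset.sum_le_sum fun k _ => Finset.card_image_le.trans (by simp)
    _ < Fintype.card σ ^ (n + 1) := Nat.geomSum_lt hσ fun k hk => Finset.mem_range.1 hk

end inputsUpTo

theorem exists_input_of_KprecF_ne_top {σ : Type} {T : FST σ} {f : List σ → ℝ} {δ x : ℝ}
    (h : KprecF T f δ x ≠ ⊤) :
    ∃ π : List σ, |f (T.out π) - x| < δ ∧ (π.length : ℕ∞) = KprecF T f δ x := by
  obtain ⟨w, hwx, hw⟩ := ENat.sInf_mem_of_ne_top h
  obtain ⟨π, rfl, hπ⟩ := ENat.sInf_mem_of_ne_top (s := {k | ∃ π, T.out π = w ∧ _ = k})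
    (by rw [← Kfst, hw]; exact h)
  exact ⟨π, hwx, hπ.trans hw⟩

noncomputable def dimFSfVia {σ : Type} [Fintype σ] (T : FST σ) (f : List σ → ℝ) (x : ℝ) : ℝ≥0∞ :=
  liminf (fun δ : ℝ =>
    (KprecF T f δ x : ℝ≥0∞) / ENNReal.ofReal (Real.logb (Fintype.card σ) (1 / δ))) (𝓝[>] 0)

theorem dimFSfSet_eq_iInf_iSup_dimFSfVia {σ : Type} [Fintype σ] (f : List σ → ℝ) (A : Set ℝ) :
    dimFSfSet f A = ⨅ T : FST σ, ⨆ x ∈ A, dimFSfVia T f x :=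
  rfl

section FST

variable {σ : Type} [Fintype σ] {T : FST σ} {f : List σ → ℝ} {x : ℝ}

theorem eq_of_dimFSfVia_lt_top (hσ : Fintype.card σ ≤ 1) (hx : dimFSfVia T f x < ⊤) :
    x = f (T.out []) := by
  -- `Real.logb` to base `0` or `1` is `0`, and a nonzero numerator over `0` is `⊤`
  have hlog : ∀ δ : ℝ, Real.logb (Fintype.card σ) (1 / δ) = 0 := by
    intro δ
    interval_cases Fintype.card σ <;> simp [Real.logb]
  have hK : ∃ᶠ δ in 𝓝[>] 0, KprecF T f δ x = 0 := by
    refine (frequently_lt_of_liminf_lt (by isBoundedDefault) hx).mono fun δ hδ => ?_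
    rw [hlog, ENNReal.ofReal_zero] at hδ
    by_contra hne
    exact hδ.ne (ENNReal.div_zero (by simpa using hne))
  refine eq_of_forall_dist_le fun ε hε => ?_
  obtain ⟨δ, hK0, hδε⟩ :=
    (hK.and_eventually (eventually_nhdsWithin_of_eventually_nhds (gt_mem_nhds hε))).exists
  obtain ⟨π, hπx, hπ⟩ := exists_input_of_KprecF_ne_top (hK0 ▸ ENat.zero_ne_top)
  obtain rfl : π = [] := List.length_eq_zero_iff.1 (by exact_mod_cast hπ.trans hK0)
  rw [Real.dist_eq, abs_sub_comm]
  exact (hπx.trans hδε).le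

theorem frequently_exists_input_of_dimFSfVia_lt (hσ : 1 < Fintype.card σ) {t : ℝ≥0}
    (hx : dimFSfVia T f x < t) :
    ∃ᶠ δ in 𝓝[>] 0, 0 < δ ∧ ∃ π : List σ,
      (π.length : ℝ) < t * Real.logb (Fintype.card σ) (1 / δ) ∧ |f (T.out π) - x| < δ := by
  refine ((frequently_lt_of_liminf_lt (by isBoundedDefault) hx).and_eventually
    (Ioo_mem_nhdsGT one_pos)).mono ?_
  rintro δ ⟨hlt, hδ0, hδ1⟩
  have hL : 0 < Real.logb (Fintype.card σ) (1 / δ) :=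
    Real.logb_pos (by exact_mod_cast hσ) (one_lt_one_div hδ0 hδ1)
  have hK := (ENNReal.div_lt_iff (Or.inl (ENNReal.ofReal_pos.2 hL).ne')
    (Or.inl ENNReal.ofReal_ne_top)).1 hlt
  obtain ⟨π, hπx, hπ⟩ := exists_input_of_KprecF_ne_top (T := T) (f := f) (x := x) (δ := δ)
    fun h => by simp [h] at hK
  refine ⟨hδ0, π, ?_, hπx⟩
  rw [← hπ, ENat.toENNReal_coe, ← ENNReal.ofReal_natCast, ← ENNReal.ofReal_coe_nnreal,
    ← ENNReal.ofReal_mul t.coe_nonneg, ENNReal.ofReal_lt_ofReal_iff'] at hK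
  exact hK.1

theorem frequently_exists_input_length_le_of_dimFSfVia_lt (hσ : 1 < Fintype.card σ)
    {t : ℝ≥0} (hx : dimFSfVia T f x < t) :
    ∃ᶠ n in atTop, ∃ π : List σ, π.length ≤ n ∧
      |x - f (T.out π)| < ((Fintype.card σ : ℝ) ^ (-(t : ℝ)⁻¹)) ^ n := by
  have hc : (1 : ℝ) < Fintype.card σ := by exact_mod_cast hσ
  have ht : 0 < (t : ℝ) := by exact_mod_cast pos_of_gt hx
  have hfloor : Tendsto (fun δ : ℝ => ⌊t * Real.logb (Fintype.card σ) (1 / δ)⌋₊) (𝓝[>] 0)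
      atTop := tendsto_nat_floor_atTop.comp <| Tendsto.const_mul_atTop ht <|
    (Real.tendsto_logb_atTop hc).comp (tendsto_inv_nhdsGT_zero.congr fun δ => (one_div δ).symm)
  refine hfloor.frequently ((frequently_exists_input_of_dimFSfVia_lt hσ hx).mono ?_)
  rintro δ ⟨hδ0, π, hπ, hπx⟩
  refine ⟨π, Nat.le_floor hπ.le, ?_⟩
  rw [abs_sub_comm]
  exact hπx.trans_le (Real.le_rpow_neg_inv_pow_of_le_mul_logb hc ht hδ0
    (Nat.floor_le ((Nat.cast_nonneg _).trans hπ.le)))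

theorem dimH_le_of_forall_dimFSfVia_lt (hσ : 1 < Fintype.card σ) {t' t : ℝ≥0} (ht' : 0 < t')
    (ht : t' < t) {A : Set ℝ} (hA : ∀ x ∈ A, dimFSfVia T f x < t') : dimH A ≤ t := by
  classical
  have hc : (1 : ℝ) < Fintype.card σ := by exact_mod_cast hσ
  set c : ℝ := (Fintype.card σ : ℝ)
  set ρ : ℝ := c ^ (-(t' : ℝ)⁻¹)
  have hρ0 : 0 < ρ := by positivity
  have hρ1 : ρ < 1 := Real.rpow_lt_one_of_one_lt_of_neg hc (by simpa using ht')
  have hcρ : (Fintype.card σ : ℝ≥0∞) * ENNReal.ofReal ρ ^ (t : ℝ) < 1 := by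
    rw [ENNReal.ofReal_rpow_of_pos hρ0, ← ENNReal.ofReal_natCast,
      ← ENNReal.ofReal_mul (by positivity), ENNReal.ofReal_lt_one, ← Real.rpow_mul (by positivity)]
    have hexp : 1 < (t' : ℝ)⁻¹ * t := by
      rw [← div_eq_inv_mul, one_lt_div (by exact_mod_cast ht')]
      exact_mod_cast ht
    calc c * c ^ (-(t' : ℝ)⁻¹ * t) = c ^ (1 + -(t' : ℝ)⁻¹ * t) := by
          rw [Real.rpow_add (by positivity), Real.rpow_one]
      _ < 1 := Real.rpow_lt_one_of_one_lt_of_neg hc (by linarith)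
  have hsum : ∑' n, (inputsUpTo σ n).card * (ENNReal.ofReal ρ ^ n) ^ (t : ℝ) ≠ ∞ := by
    refine ne_top_of_le_ne_top (ENNReal.mul_ne_top (ENNReal.natCast_ne_top (Fintype.card σ))
      (tsum_geometric_lt_top.2 hcρ).ne) ?_
    rw [← ENNReal.tsum_mul_left]
    refine ENNReal.tsum_le_tsum fun n => ?_
    rw [← ENNReal.rpow_natCast_mul, mul_comm (n : ℝ), ENNReal.rpow_mul_natCast, mul_pow,
      ← mul_assoc, ← pow_succ']
    gcongr
    exact_mod_cast (card_inputsUpTo_lt hσ n).le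
  have hcover : ∀ x ∈ A, ∃ᶠ n in atTop, ∃ π ∈ inputsUpTo σ n,
      x ∈ eball (f (T.out π)) (ENNReal.ofReal ρ ^ n) := fun x hx =>
    (frequently_exists_input_length_le_of_dimFSfVia_lt hσ (hA x hx)).mono
      fun n ⟨π, hπn, hπx⟩ => ⟨π, mem_inputsUpTo.2 hπn, by
        rwa [mem_eball, ← ENNReal.ofReal_pow hρ0.le, edist_lt_ofReal, Real.dist_eq]⟩
  have hnull : μH[t] A = 0 := hausdorffMeasure_eq_zero_of_frequently_mem_eball
    (fun π => f (T.out π)) (inputsUpTo σ) (pow_right_anti₀ bot_le (ENNReal.ofReal_lt_one.2 hρ1).le)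
    (ENNReal.tendsto_pow_atTop_nhds_zero_of_lt_one (ENNReal.ofReal_lt_one.2 hρ1)) t.2 hsum hcover
  exact dimH_le_of_hausdorffMeasure_ne_top (hnull ▸ ENNReal.zero_ne_top)

end FST

theorem dimH_le_dimFSfSet_general (σ : Type) [Fintype σ] (f : List σ → ℝ) (A : Set ℝ) :
    dimH A ≤ dimFSfSet f A := by
  rw [dimFSfSet_eq_iInf_iSup_dimFSfVia]
  refine le_iInf fun T => le_of_forall_gt_imp_ge_of_dense fun a ha => ?_
  rcases le_or_gt (Fintype.card σ) 1 with hσ | hσ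
  · have hsub : A ⊆ {f (T.out [])} := fun x hx =>
      eq_of_dimFSfVia_lt_top hσ (((le_biSup (dimFSfVia T f) hx).trans_lt ha).trans_le le_top)
    calc dimH A ≤ dimH {f (T.out [])} := dimH_mono hsub
      _ = 0 := dimH_singleton _
      _ ≤ a := bot_le
  · obtain ⟨t', hst', ht'a⟩ := ENNReal.lt_iff_exists_nnreal_btwn.1 ha
    obtain ⟨t, ht't, hta⟩ := ENNReal.lt_iff_exists_nnreal_btwn.1 ht'a
    exact (dimH_le_of_forall_dimFSfVia_lt hσ (by exact_mod_cast pos_of_gt hst')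
      (by exact_mod_cast ht't) fun x hx => (le_biSup (dimFSfVia T f) hx).trans_lt hst').trans
      hta.le

/-- dim_H(A) ≤ dim_FS^f(A) for every separator enumerator f. -/
theorem dimH_le_dimFSfSet (σ : Type) [Fintype σ] (f : List σ → ℝ) (hf : isSE f)
    (A : Set ℝ) (hA : A ⊆ Set.Ico (0:ℝ) 1) :
    dimH A ≤ dimFSfSet f A :=
  dimH_le_dimFSfSet_general σ f A
end
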